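/- Let α ∈ (0, 1/2] and let y ∈ ℝ² satisfy y₁ ≥ 1 and 2|y₂| ≤ y₁^α. Set a = y₁ − |y₂|^{1/α} and b = y₁^α − |y₂|. Then a > 0, b > 0, and ab/√(a² + b²) ≥ ‖y‖^α / 8. -/

import Mathlib

/-! With `x = y₁ ≥ 1` and `t = |y₂| ≤ x^α / 2`, both legs of the corner are at least `x^α / 2`:
`b ≥ x^α - x^α / 2` directly, and `t^{1/α} ≤ x / 2 ≤ x - x^α / 2` because `α ≤ 1`. A right
triangle whose legs are at least `u` has altitude `ab/√(a² + b²) ≥ u/√2`, while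
`‖y‖^α ≤ (2x)^α ≤ 2 x^α`. -/

theorem EuclideanSpace.norm_fin_two_le (y : EuclideanSpace ℝ (Fin 2)) : ‖y‖ ≤ |y 0| + |y 1| := by
  refine le_of_sq_le_sq ?_ (by positivity)
  rw [EuclideanSpace.real_norm_sq_eq, Fin.sum_univ_two]
  nlinarith [abs_nonneg (y 0), abs_nonneg (y 1), sq_abs (y 0), sq_abs (y 1)]

theorem Real.rpow_inv_le_div_of_le_rpow_div {x t c α : ℝ} (hx : 0 ≤ x) (ht : 0 ≤ t)
    (hc : 1 ≤ c) (hα : 0 < α) (hα1 : α ≤ 1) (htx : t ≤ x ^ α / c) :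
    t ^ α⁻¹ ≤ x / c := by
  have hc0 : 0 < c := by linarith
  rw [Real.rpow_inv_le_iff_of_pos ht (by positivity) hα, Real.div_rpow hx hc0.le]
  calc t ≤ x ^ α / c := htx
    _ ≤ x ^ α / c ^ α := by gcongr; exact Real.rpow_le_self_of_one_le hc hα1

theorem div_sqrt_two_le_mul_div_sqrt_sq_add_sq {a b u : ℝ} (hu : 0 < u) (ha : u ≤ a)
    (hb : u ≤ b) : u / √2 ≤ a * b / √(a ^ 2 + b ^ 2) := by
  have ha0 : 0 < a := hu.trans_le ha
  have hb0 : 0 < b := hu.trans_le hb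
  rw [div_le_div_iff₀ (by positivity) (by positivity)]
  refine le_of_sq_le_sq ?_ (by positivity)
  rw [mul_pow, mul_pow, Real.sq_sqrt (by positivity), Real.sq_sqrt zero_le_two]
  nlinarith [mul_le_mul_of_nonneg_left (pow_le_pow_left₀ hu.le ha 2) (sq_nonneg b),
    mul_le_mul_of_nonneg_left (pow_le_pow_left₀ hu.le hb 2) (sq_nonneg a)]

theorem parabola_corner_estimate (α : ℝ) (hα : 0 < α) (hα' : α ≤ 1 / 2)
    (y : EuclideanSpace ℝ (Fin 2)) (hy1 : 1 ≤ y 0) (hy2 : 2 * |y 1| ≤ (y 0) ^ α) :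
    0 < y 0 - |y 1| ^ (1 / α) ∧ 0 < (y 0) ^ α - |y 1| ∧
      ‖y‖ ^ α / 8 ≤ (y 0 - |y 1| ^ (1 / α)) * ((y 0) ^ α - |y 1|) /
        Real.sqrt ((y 0 - |y 1| ^ (1 / α)) ^ 2 + ((y 0) ^ α - |y 1|) ^ 2) := by
  set x := y 0
  set t := |y 1|
  have hα1 : α ≤ 1 := by linarith
  have hx : 0 ≤ x := by linarith
  have hxα : 1 ≤ x ^ α := Real.one_le_rpow hy1 hα.le
  have hxαx : x ^ α ≤ x := Real.rpow_le_self_of_one_le hy1 hα1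
  have ht : t ^ (1 / α) ≤ x / 2 := by
    rw [one_div]
    exact Real.rpow_inv_le_div_of_le_rpow_div hx (abs_nonneg _) one_le_two hα hα1 (by linarith)
  have hnorm : ‖y‖ ^ α ≤ 2 * x ^ α :=
    calc ‖y‖ ^ α ≤ (2 * x) ^ α := by
          gcongr
          linarith [y.norm_fin_two_le, abs_of_nonneg hx]
      _ = 2 ^ α * x ^ α := Real.mul_rpow zero_le_two hx
      _ ≤ 2 * x ^ α := by gcongr; exact Real.rpow_le_self_of_one_le one_le_two hα1
  have hcorner := div_sqrt_two_le_mul_div_sqrt_sq_add_sq (a := x - t ^ (1 / α)) (b := x ^ α - t)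
    (u := x ^ α / 2) (by positivity) (by linarith) (by linarith)
  refine ⟨by linarith, by linarith, le_trans ?_ hcorner⟩
  calc ‖y‖ ^ α / 8 ≤ x ^ α / 2 / 2 := by linarith
    _ ≤ x ^ α / 2 / √2 := by
      gcongr
      rw [Real.sqrt_le_left zero_le_two]
      norm_num
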